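/- Let U ⊆ ℂ∖{0, 1/4, 1} be open and let u, v : U → ℂ be three-times differentiable functions satisfying L^{ban,(2)} u = 0 and L^{ban,(2)} v = 0 on U. Then the product u·v satisfies L^{ban,(3)}(u·v) = 0 on U. (The third-order banana operator L^{ban,(3)} is the symmetric square of the second-order operator L^{ban,(2)}.) -/

import Mathlib

noncomputable section

/-- The second-order banana operator `L^{ban,(2)}`. -/
def L2ban (F : ℂ → ℂ) (x : ℂ) : ℂ :=
  deriv (deriv F) x + (8 * x - 5) / (2 * (x - 1) * (4 * x - 1)) * deriv F x
    - (2 * x - 1) / (4 * x ^ 2 * (x - 1) * (4 * x - 1)) * F x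

/-- The third-order banana operator `L^{ban,(3)}`. -/
def L3ban (F : ℂ → ℂ) (x : ℂ) : ℂ :=
  deriv (deriv (deriv F)) x + 3 * (8 * x - 5) / (2 * (x - 1) * (4 * x - 1)) * deriv (deriv F) x
    + (4 * x ^ 2 - 2 * x + 1) / ((x - 1) * (4 * x - 1) * x ^ 2) * deriv F x
    + 1 / (x ^ 3 * (4 * x - 1)) * F x

/-- The sunrise differential operator `L^{sun}`. -/
def Lsun (f : ℂ → ℂ) (t : ℂ) : ℂ :=
  deriv (deriv f) t + (1 / (t - 9) + 1 / (t - 1) + 1 / t) * deriv f t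
    + (1 / (12 * (t - 9)) + 1 / (4 * (t - 1)) - 1 / (3 * t)) * f t

/-- A function is three-times differentiable at every point of `U`. -/
def ThreeTimesDiffOn (f : ℂ → ℂ) (U : Set ℂ) : Prop :=
  (∀ x ∈ U, DifferentiableAt ℂ f x) ∧ (∀ x ∈ U, DifferentiableAt ℂ (deriv f) x) ∧
    (∀ x ∈ U, DifferentiableAt ℂ (deriv (deriv f)) x)

lemma hasDerivAt_Pban (x : ℂ) (h1 : x - 1 ≠ 0) (h4 : 4 * x - 1 ≠ 0) :
    HasDerivAt (fun y : ℂ => (8 * y - 5) / (2 * (y - 1) * (4 * y - 1)))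
      ((8 * (2 * (x - 1) * (4 * x - 1)) - (8 * x - 5) * (16 * x - 10))
        / (2 * (x - 1) * (4 * x - 1)) ^ 2) x := by
  have hn : HasDerivAt (fun y : ℂ => 8 * y - 5) 8 x := by
    simpa using ((hasDerivAt_id x).const_mul 8).sub_const 5
  have hd : HasDerivAt (fun y : ℂ => 2 * (y - 1) * (4 * y - 1)) (16 * x - 10) x := by
    have h := (((hasDerivAt_id x).sub_const 1).const_mul 2).mul
      (((hasDerivAt_id x).const_mul 4).sub_const 1)
    simp only [id_eq] at h
    refine h.congr_deriv ?_
    ring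
  exact hn.div hd (by simp [mul_ne_zero, h1, h4])

lemma hasDerivAt_Qban (x : ℂ) (h0 : x ≠ 0) (h1 : x - 1 ≠ 0) (h4 : 4 * x - 1 ≠ 0) :
    HasDerivAt (fun y : ℂ => (2 * y - 1) / (4 * y ^ 2 * (y - 1) * (4 * y - 1)))
      ((2 * (4 * x ^ 2 * (x - 1) * (4 * x - 1)) - (2 * x - 1) * (64 * x ^ 3 - 60 * x ^ 2 + 8 * x))
        / (4 * x ^ 2 * (x - 1) * (4 * x - 1)) ^ 2) x := by
  have hn : HasDerivAt (fun y : ℂ => 2 * y - 1) 2 x := by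
    simpa using ((hasDerivAt_id x).const_mul 2).sub_const 1
  have hd : HasDerivAt (fun y : ℂ => 4 * y ^ 2 * (y - 1) * (4 * y - 1))
      (64 * x ^ 3 - 60 * x ^ 2 + 8 * x) x := by
    have h := (((hasDerivAt_pow 2 x).const_mul 4).mul ((hasDerivAt_id x).sub_const 1)).mul
      (((hasDerivAt_id x).const_mul 4).sub_const 1)
    simp only [id_eq, Pi.mul_apply] at h
    refine h.congr_deriv ?_
    ring
  exact hn.div hd (by simp [mul_ne_zero, h0, h1, h4, pow_ne_zero])

set_option maxHeartbeats 1000000 in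
/-- The third-order banana operator is the symmetric square of the second-order one: the
product of any two solutions of `L^{ban,(2)}` is a solution of `L^{ban,(3)}`. -/
theorem L3ban_symmetric_square_of_L2ban
    (U : Set ℂ) (hU : IsOpen U) (hUsub : U ⊆ ({0, 1/4, 1} : Set ℂ)ᶜ)
    (u v : ℂ → ℂ) (hu : ThreeTimesDiffOn u U) (hv : ThreeTimesDiffOn v U)
    (hLu : ∀ x ∈ U, L2ban u x = 0) (hLv : ∀ x ∈ U, L2ban v x = 0) :
    ∀ x ∈ U, L3ban (fun t => u t * v t) x = 0 := by
  have hne : ∀ y ∈ U, y ≠ 0 ∧ y - 1 ≠ 0 ∧ 4 * y - 1 ≠ 0 := by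
    intro y hy
    have h := hUsub hy
    simp only [Set.mem_compl_iff, Set.mem_insert_iff, Set.mem_singleton_iff, not_or] at h
    refine ⟨h.1, sub_ne_zero.2 h.2.2, fun hc => h.2.1 ?_⟩
    linear_combination hc / 4
  -- the second-order ODE rewritten
  have hu2 : ∀ y ∈ U, deriv (deriv u) y
      = (2 * y - 1) / (4 * y ^ 2 * (y - 1) * (4 * y - 1)) * u y
        - (8 * y - 5) / (2 * (y - 1) * (4 * y - 1)) * deriv u y := by
    intro y hy
    have h := hLu y hy
    unfold L2ban at h
    linear_combination h
  have hv2 : ∀ y ∈ U, deriv (deriv v) y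
      = (2 * y - 1) / (4 * y ^ 2 * (y - 1) * (4 * y - 1)) * v y
        - (8 * y - 5) / (2 * (y - 1) * (4 * y - 1)) * deriv v y := by
    intro y hy
    have h := hLv y hy
    unfold L2ban at h
    linear_combination h
  -- first derivative of the product
  have hw1 : ∀ y ∈ U, deriv (fun t => u t * v t) y = deriv u y * v y + u y * deriv v y :=
    fun y hy => deriv_mul (hu.1 y hy) (hv.1 y hy)
  -- second derivative of the product
  have hw2 : ∀ y ∈ U, deriv (deriv (fun t => u t * v t)) y
      = deriv (deriv u) y * v y + 2 * (deriv u y * deriv v y) + u y * deriv (deriv v) y := by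
    intro y hy
    have hE : deriv (fun t => u t * v t)
        =ᶠ[nhds y] (fun z => deriv u z * v z + u z * deriv v z) := by
      filter_upwards [hU.mem_nhds hy] with z hz using hw1 z hz
    have H : HasDerivAt (fun z => deriv u z * v z + u z * deriv v z)
        ((deriv (deriv u) y * v y + deriv u y * deriv v y)
          + (deriv u y * deriv v y + u y * deriv (deriv v) y)) y :=
      ((hu.2.1 y hy).hasDerivAt.mul (hv.1 y hy).hasDerivAt).add
        ((hu.1 y hy).hasDerivAt.mul (hv.2.1 y hy).hasDerivAt)
    rw [hE.deriv_eq, H.deriv]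
    ring
  intro x hx
  obtain ⟨hx0, hx1, hx4⟩ := hne x hx
  -- third derivative of the product
  have hw3 : deriv (deriv (deriv (fun t => u t * v t))) x
      = deriv (deriv (deriv u)) x * v x + 3 * (deriv (deriv u) x * deriv v x)
        + 3 * (deriv u x * deriv (deriv v) x) + u x * deriv (deriv (deriv v)) x := by
    have hE : deriv (deriv (fun t => u t * v t)) =ᶠ[nhds x]
        (fun z => deriv (deriv u) z * v z + 2 * (deriv u z * deriv v z)
          + u z * deriv (deriv v) z) := by
      filter_upwards [hU.mem_nhds hx] with z hz using hw2 z hz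
    have H : HasDerivAt (fun z => deriv (deriv u) z * v z + 2 * (deriv u z * deriv v z)
          + u z * deriv (deriv v) z)
        (((deriv (deriv (deriv u)) x * v x + deriv (deriv u) x * deriv v x)
          + 2 * (deriv (deriv u) x * deriv v x + deriv u x * deriv (deriv v) x))
          + (deriv u x * deriv (deriv v) x + u x * deriv (deriv (deriv v)) x)) x :=
      (((hu.2.2 x hx).hasDerivAt.mul (hv.1 x hx).hasDerivAt).add
        (((hu.2.1 x hx).hasDerivAt.mul (hv.2.1 x hx).hasDerivAt).const_mul 2)).add
        ((hu.1 x hx).hasDerivAt.mul (hv.2.2 x hx).hasDerivAt)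
    rw [hE.deriv_eq, H.deriv]
    ring
  -- third derivatives of u and v from the ODE
  have hu3 : deriv (deriv (deriv u)) x
      = ((2 * (4 * x ^ 2 * (x - 1) * (4 * x - 1))
            - (2 * x - 1) * (64 * x ^ 3 - 60 * x ^ 2 + 8 * x))
          / (4 * x ^ 2 * (x - 1) * (4 * x - 1)) ^ 2 * u x
          + (2 * x - 1) / (4 * x ^ 2 * (x - 1) * (4 * x - 1)) * deriv u x)
        - ((8 * (2 * (x - 1) * (4 * x - 1)) - (8 * x - 5) * (16 * x - 10))
            / (2 * (x - 1) * (4 * x - 1)) ^ 2 * deriv u x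
          + (8 * x - 5) / (2 * (x - 1) * (4 * x - 1)) * deriv (deriv u) x) := by
    have hE : deriv (deriv u) =ᶠ[nhds x]
        (fun y => (2 * y - 1) / (4 * y ^ 2 * (y - 1) * (4 * y - 1)) * u y
          - (8 * y - 5) / (2 * (y - 1) * (4 * y - 1)) * deriv u y) := by
      filter_upwards [hU.mem_nhds hx] with z hz using hu2 z hz
    have H := ((hasDerivAt_Qban x hx0 hx1 hx4).mul (hu.1 x hx).hasDerivAt).sub
      ((hasDerivAt_Pban x hx1 hx4).mul (hu.2.1 x hx).hasDerivAt)
    rw [hE.deriv_eq]; exact H.deriv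
  have hv3 : deriv (deriv (deriv v)) x
      = ((2 * (4 * x ^ 2 * (x - 1) * (4 * x - 1))
            - (2 * x - 1) * (64 * x ^ 3 - 60 * x ^ 2 + 8 * x))
          / (4 * x ^ 2 * (x - 1) * (4 * x - 1)) ^ 2 * v x
          + (2 * x - 1) / (4 * x ^ 2 * (x - 1) * (4 * x - 1)) * deriv v x)
        - ((8 * (2 * (x - 1) * (4 * x - 1)) - (8 * x - 5) * (16 * x - 10))
            / (2 * (x - 1) * (4 * x - 1)) ^ 2 * deriv v x
          + (8 * x - 5) / (2 * (x - 1) * (4 * x - 1)) * deriv (deriv v) x) := by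
    have hE : deriv (deriv v) =ᶠ[nhds x]
        (fun y => (2 * y - 1) / (4 * y ^ 2 * (y - 1) * (4 * y - 1)) * v y
          - (8 * y - 5) / (2 * (y - 1) * (4 * y - 1)) * deriv v y) := by
      filter_upwards [hU.mem_nhds hx] with z hz using hv2 z hz
    have H := ((hasDerivAt_Qban x hx0 hx1 hx4).mul (hv.1 x hx).hasDerivAt).sub
      ((hasDerivAt_Pban x hx1 hx4).mul (hv.2.1 x hx).hasDerivAt)
    rw [hE.deriv_eq]; exact H.deriv
  have hix : x * x⁻¹ = 1 := mul_inv_cancel₀ hx0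
  have hi1 : (x - 1) * (x - 1)⁻¹ = 1 := mul_inv_cancel₀ hx1
  have hi4 : (4 * x - 1) * (4 * x - 1)⁻¹ = 1 := mul_inv_cancel₀ hx4
  simp only [L3ban]
  rw [hw3, hw2 x hx, hw1 x hx, hu3, hv3, hu2 x hx, hv2 x hx]
  simp only [div_eq_mul_inv, mul_inv, ← inv_pow]
  linear_combination ((4 : ℂ) * (x - 1)⁻¹ * (4 * x - 1)⁻¹ * (deriv u x) * (v x) + (4 : ℂ) * (x - 1)⁻¹ * (4 * x - 1)⁻¹ * (u x) * (deriv v x) + (4 : ℂ) * x⁻¹ * (x - 1)⁻¹ * (4 * x - 1)⁻¹ ^ 2 * (u x) * (v x) + (4 : ℂ) * x⁻¹ * (x - 1)⁻¹ ^ 2 * (4 * x - 1)⁻¹ ^ 2 * (u x) * (v x) + (4 : ℂ) * x⁻¹ ^ 2 * (4 * x - 1)⁻¹ ^ 2 * (u x) * (v x) + (-1 : ℂ) * x⁻¹ ^ 2 * (x - 1)⁻¹ * (4 * x - 1)⁻¹ ^ 2 * (u x) * (v x) + (-15/2 : ℂ) * x⁻¹ ^ 2 * (x - 1)⁻¹ ^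 2 * (4 * x - 1)⁻¹ ^ 2 * (u x) * (v x) + x⁻¹ ^ 3 * (x - 1)⁻¹ ^ 2 * (4 * x - 1)⁻¹ ^ 2 * (u x) * (v x) + (4 : ℂ) * x * x⁻¹ * (x - 1)⁻¹ * (4 * x - 1)⁻¹ * (deriv u x) * (v x) + (4 : ℂ) * x * x⁻¹ * (x - 1)⁻¹ * (4 * x - 1)⁻¹ * (u x) * (deriv v x) + (-4 : ℂ) * x * x⁻¹ * (x - 1)⁻¹ ^ 2 * (4 * x - 1)⁻¹ ^ 2 * (u x) * (v x) + (18 : ℂ) * x * x⁻¹ ^ 2 * (x - 1)⁻¹ ^ 2 * (4 * x - 1)⁻¹ ^ 2 * (u x) * (v x) + (-17/2 : ℂ) * x * x⁻¹ ^ 3 * (x - 1)⁻¹ ^ 2 * (4 * x - 1)⁻¹ ^ 2 * (u x) * (v x) + (-12 : ℂ) * x ^ 2 * x⁻¹ ^ 2 * (x - 1)⁻¹ ^ 2 * (4 * x - 1)⁻¹ ^ 2 * (u x) * (v x) + (18 : ℂ) * x ^ 2 * x⁻¹ ^ 3 * (x - 1)⁻¹ ^ 2 * (4 * x - 1)⁻¹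 ^ 2 * (u x) * (v x) + (-12 : ℂ) * x ^ 3 * x⁻¹ ^ 3 * (x - 1)⁻¹ ^ 2 * (4 * x - 1)⁻¹ ^ 2 * (u x) * (v x)) * hix + ((4 : ℂ) * (x - 1)⁻¹ * (4 * x - 1)⁻¹ ^ 2 * (deriv u x) * (v x) + (4 : ℂ) * (x - 1)⁻¹ * (4 * x - 1)⁻¹ ^ 2 * (u x) * (deriv v x) + (-4 : ℂ) * x⁻¹ * (x - 1)⁻¹ * (4 * x - 1)⁻¹ ^ 2 * (u x) * (v x) + (-4 : ℂ) * x⁻¹ ^ 2 * (4 * x - 1)⁻¹ ^ 2 * (u x) * (v x) + (5 : ℂ) * x⁻¹ ^ 2 * (x - 1)⁻¹ * (4 * x - 1)⁻¹ ^ 2 * (u x) * (v x) + x⁻¹ ^ 3 * (4 * x - 1)⁻¹ ^ 2 * (u x) * (v x) + (-1 : ℂ) * x⁻¹ ^ 3 * (x - 1)⁻¹ * (4 * x - 1)⁻¹ ^ 2 * (u x) * (v x) + (-16 : ℂ) * x * (x - 1)⁻¹ * (4 * x - 1)⁻¹ ^ 2 * (deriv u x) * (v x) + (-16 : ℂ)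 * x * (x - 1)⁻¹ * (4 * x - 1)⁻¹ ^ 2 * (u x) * (deriv v x)) * hi1 + ((-4 : ℂ) * (x - 1)⁻¹ * (4 * x - 1)⁻¹ * (deriv u x) * (v x) + (-4 : ℂ) * (x - 1)⁻¹ * (4 * x - 1)⁻¹ * (u x) * (deriv v x) + (-1 : ℂ) * x⁻¹ ^ 3 * (4 * x - 1)⁻¹ * (u x) * (v x)) * hi4

end
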